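/- arXiv:2405.10541 — 2 statements merged into one kernel-verified Lean document; each statement's English description precedes it below -/
import Mathlib

section
/- Let Z1 ⊂ ℂ^6 be defined by z1+…+z6 = 0, ρ3 z3 + z4 + ρ5 z5 + ρ6 z6 = 1, z3 z4 = λ1 z1 z2, z5 z6 = λ2 z1 z2, with parameters satisfying λ1/λ2 = ρ5 ρ6/ρ3 (and ρ3, ρ5, ρ6, λ1, λ2 nonzero). Then in the projective completion in ℙ^6, the curve at infinity (obtained by setting the homogenizing coordinate Z0 = 0) satisfies (Z4 + ρ6 Z6)(Z4 + ρ5 Z5) = 0, i.e. it is the union of the two loci {ρ3 Z3 = −ρ5 Z5, Z4 = −ρ6 Z6} and {ρ3 Z3 = −ρ6 Z6, Z4 = −ρ5 Z5} (intersected with the remaining equations). -/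
/-- On the curve at infinity (`Z0 = 0`) of the projective completion of the PVI Segre
surface, with `λ1/λ2 = ρ5ρ6/ρ3`, one has `(Z4 + ρ6 Z6)(Z4 + ρ5 Z5) = 0`; i.e. the curve is
the union of the two loci `{ρ3 Z3 = −ρ5 Z5, Z4 = −ρ6 Z6}` and `{ρ3 Z3 = −ρ6 Z6, Z4 = −ρ5 Z5}`. -/
theorem stmt6 (ρ3 ρ5 ρ6 lam1 lam2 Z1 Z2 Z3 Z4 Z5 Z6 : ℂ)
    (hρ3 : ρ3 ≠ 0) (hρ5 : ρ5 ≠ 0) (hρ6 : ρ6 ≠ 0) (hl1 : lam1 ≠ 0) (hl2 : lam2 ≠ 0)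
    (hrel : lam1 * ρ3 = lam2 * (ρ5 * ρ6))
    (e1 : Z1 + Z2 + Z3 + Z4 + Z5 + Z6 = 0)
    (e2 : ρ3 * Z3 + Z4 + ρ5 * Z5 + ρ6 * Z6 = 0)
    (e3 : Z3 * Z4 = lam1 * (Z1 * Z2))
    (e4 : Z5 * Z6 = lam2 * (Z1 * Z2)) :
    (Z4 + ρ6 * Z6) * (Z4 + ρ5 * Z5) = 0 ∧
    ((ρ3 * Z3 = -(ρ5 * Z5) ∧ Z4 = -(ρ6 * Z6)) ∨
      (ρ3 * Z3 = -(ρ6 * Z6) ∧ Z4 = -(ρ5 * Z5))) := by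
  have key : ρ3 * (Z3 * Z4) = ρ5 * ρ6 * (Z5 * Z6) := by
    have h : lam2 * (ρ3 * (Z3 * Z4)) = lam2 * (ρ5 * ρ6 * (Z5 * Z6)) := by
      linear_combination (lam2 * ρ3) * e3 - (lam2 * (ρ5 * ρ6)) * e4 + (lam2 * (Z1 * Z2)) * hrel
    exact mul_left_cancel₀ hl2 h
  have hfac : (Z4 + ρ6 * Z6) * (Z4 + ρ5 * Z5) = 0 := by
    linear_combination Z4 * e2 - key
  refine ⟨hfac, ?_⟩
  rcases mul_eq_zero.mp hfac with h | h
  · left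
    exact ⟨by linear_combination e2 - h, by linear_combination h⟩
  · right
    exact ⟨by linear_combination e2 - h, by linear_combination h⟩
end

section
/- Let Z ⊂ ℂ^6 be the Painlevé II (JM) Segre surface with parameters ρ4 = λ1 = 1 and λ2 = 1 + ω2 (ω2 ≠ −1), defined by z1+z3+z4+z5+z6 = 0, z4 = 1, z3 z4 − z1 z2 = 0, z3 z4 − λ2 z5 z6 = 0 with λ2 = 1+ω2. Let Y^JM ⊂ ℂ^4 be {y1 y2 − y4 = 0, y3 y4 − y1 + ω2 y2 − y3 − ω2 + 1 = 0}. Then for ω2 ∉ {0,−1} the map z1 = ω2(y4−1)/(1+ω2), z2 = −1 − y3/ω2, z3 = (1 − y1 + ω2 y2 − ω2 y4)/(1+ω2), z4 = 1, z5 = (y1−1)/(1+ω2), z6 = −(1+ω2 y2)/(1+ω2) restricts to an isomorphism Y^JM → Z. -/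
/-- With `ω2 ∉ {0, −1}` and `λ2 = 1 + ω2`, the affine map
`z1 = ω2(y4−1)/(1+ω2)`, `z2 = −1 − y3/ω2`, `z3 = (1 − y1 + ω2y2 − ω2y4)/(1+ω2)`, `z4 = 1`,
`z5 = (y1−1)/(1+ω2)`, `z6 = −(1+ω2y2)/(1+ω2)` restricts to an isomorphism from the PII-JM
blown-down Segre surface `Y^JM = {y1y2 − y4 = 0, y3y4 − y1 + ω2y2 − y3 − ω2 + 1 = 0}` onto
the Z-Segre surface `{z1+z3+z4+z5+z6 = 0, z4 = 1, z3z4 − z1z2 = 0, z3z4 − (1+ω2)z5z6 = 0}`,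
with affine inverse `y1 = 1+(1+ω2)z5`, `y2 = (−(1+ω2)z6 − 1)/ω2`, `y3 = −ω2(z2+1)`,
`y4 = 1+(1+ω2)z1/ω2`. -/
theorem stmt14 (ω2 : ℂ) (h0 : ω2 ≠ 0) (h1 : ω2 ≠ -1) :
    (∀ y1 y2 y3 y4 : ℂ,
      y1 * y2 - y4 = 0 → y3 * y4 - y1 + ω2 * y2 - y3 - ω2 + 1 = 0 →
      (ω2 * (y4 - 1) / (1 + ω2) + (1 - y1 + ω2 * y2 - ω2 * y4) / (1 + ω2) + 1
          + (y1 - 1) / (1 + ω2) + (-(1 + ω2 * y2) / (1 + ω2)) = 0 ∧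
        (1 : ℂ) = 1 ∧
        (1 - y1 + ω2 * y2 - ω2 * y4) / (1 + ω2) * 1
          - (ω2 * (y4 - 1) / (1 + ω2)) * (-1 - y3 / ω2) = 0 ∧
        (1 - y1 + ω2 * y2 - ω2 * y4) / (1 + ω2) * 1
          - (1 + ω2) * ((y1 - 1) / (1 + ω2)) * (-(1 + ω2 * y2) / (1 + ω2)) = 0 ∧
        -- the inverse map sends the image back to `(y1,y2,y3,y4)`
        1 + (1 + ω2) * ((y1 - 1) / (1 + ω2)) = y1 ∧
        (-(1 + ω2) * (-(1 + ω2 * y2) / (1 + ω2)) - 1) / ω2 = y2 ∧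
        -ω2 * ((-1 - y3 / ω2) + 1) = y3 ∧
        1 + (1 + ω2) * (ω2 * (y4 - 1) / (1 + ω2)) / ω2 = y4)) ∧
    (∀ z1 z2 z3 z4 z5 z6 : ℂ,
      z1 + z3 + z4 + z5 + z6 = 0 → z4 = 1 → z3 * z4 - z1 * z2 = 0 →
      z3 * z4 - (1 + ω2) * (z5 * z6) = 0 →
      ((1 + (1 + ω2) * z5) * ((-(1 + ω2) * z6 - 1) / ω2) - (1 + (1 + ω2) * z1 / ω2) = 0 ∧
        (-ω2 * (z2 + 1)) * (1 + (1 + ω2) * z1 / ω2) - (1 + (1 + ω2) * z5)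
          + ω2 * ((-(1 + ω2) * z6 - 1) / ω2) - (-ω2 * (z2 + 1)) - ω2 + 1 = 0 ∧
        -- the forward map sends the preimage back to `(z1,…,z6)`
        ω2 * ((1 + (1 + ω2) * z1 / ω2) - 1) / (1 + ω2) = z1 ∧
        -1 - (-ω2 * (z2 + 1)) / ω2 = z2 ∧
        (1 - (1 + (1 + ω2) * z5) + ω2 * ((-(1 + ω2) * z6 - 1) / ω2)
          - ω2 * (1 + (1 + ω2) * z1 / ω2)) / (1 + ω2) = z3 ∧
        (1 : ℂ) = z4 ∧
        ((1 + (1 + ω2) * z5) - 1) / (1 + ω2) = z5 ∧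
        -(1 + ω2 * ((-(1 + ω2) * z6 - 1) / ω2)) / (1 + ω2) = z6)) := by
  have hs : 1 + ω2 ≠ 0 := by intro h; apply h1; linear_combination h
  constructor
  · intro y1 y2 y3 y4 e1 e2
    refine ⟨?_, rfl, ?_, ?_, ?_, ?_, ?_, ?_⟩
    · field_simp
      ring_nf
    · field_simp
      linear_combination e2
    · field_simp
      linear_combination ω2 * e1
    all_goals field_simp
    all_goals ring
  · intro z1 z2 z3 z4 z5 z6 e1 e2 e3 e4
    subst e2
    refine ⟨?_, ?_, ?_, ?_, ?_, rfl, ?_, ?_⟩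
    · field_simp
      linear_combination (-ω2 - 1) * e1 + (ω2 + 1) * e4
    · field_simp
      linear_combination (-ω2 - 1) * e1 + (ω2 + 1) * e3
    · field_simp
      ring
    · field_simp
      ring
    · field_simp
      linear_combination (-ω2 - 1) * e1
    all_goals field_simp
    all_goals ring
end
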